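/- arXiv:2407.04582 — 3 statements merged into one kernel-verified Lean document; each statement's English description precedes it below -/
import Mathlib

section
/- (Soft Covering Lemma) For any real γ, input distribution P on finite X, and positive integer M, define T = {(x,y) : log(W(y|x)/PW(y)) ≤ γ}. Then there exists an M-type distribution P̃ on X such that d(P̃W, PW) ≤ (P × W)(T^c) + (1/2)·√(e^γ / M). -/
open scoped BigOperators Classical
open Finset


open scoped BigOperators Classical

open Finset

private lemma sc_marg0 {X : Type*} [Fintype X] {M : ℕ} (P : X → ℝ)
    (hP1 : ∑ x, P x = 1) :
    ∑ C : Fin M → X, ∏ k, P (C k) = 1 := by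
  rw [← Fintype.prod_sum]
  simp [hP1]

private lemma sc_marg1 {X : Type*} [Fintype X] {M : ℕ} (P h : X → ℝ)
    (hP1 : ∑ x, P x = 1) (i : Fin M) :
    ∑ C : Fin M → X, (∏ k, P (C k)) * h (C i) = ∑ x, P x * h x := by
  have key : ∀ C : Fin M → X, (∏ k, P (C k)) * h (C i)
      = ∏ k, (P (C k) * if k = i then h (C k) else 1) := by
    intro C
    rw [Finset.prod_mul_distrib]
    congr 1
    simp
  simp_rw [key]
  rw [← Fintype.prod_sum (fun (k : Fin M) (x : X) => P x * if k = i then h x else 1)]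
  have h2 : ∀ k : Fin M, (∑ x, P x * if k = i then h x else 1)
      = if k = i then (∑ x, P x * h x) else 1 := by
    intro k; by_cases hk : k = i <;> simp [hk, hP1]
  simp_rw [h2]
  simp

private lemma sc_marg2 {X : Type*} [Fintype X] {M : ℕ} (P h g : X → ℝ)
    (hP1 : ∑ x, P x = 1) {i j : Fin M} (hij : i ≠ j) :
    ∑ C : Fin M → X, (∏ k, P (C k)) * (h (C i) * g (C j))
      = (∑ x, P x * h x) * (∑ x, P x * g x) := by
  have key : ∀ C : Fin M → X, (∏ k, P (C k)) * (h (C i) * g (C j))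
      = ∏ k, (P (C k) * ((if k = i then h (C k) else 1) * (if k = j then g (C k) else 1))) := by
    intro C
    rw [Finset.prod_mul_distrib, Finset.prod_mul_distrib]
    simp [hij, hij.symm]
  simp_rw [key]
  rw [← Fintype.prod_sum (fun (k : Fin M) (x : X) =>
    P x * ((if k = i then h x else 1) * (if k = j then g x else 1)))]
  have h2 : ∀ k : Fin M, (∑ x, P x * ((if k = i then h x else 1) * (if k = j then g x else 1)))
      = (if k = i then (∑ x, P x * h x) else 1) * (if k = j then (∑ x, P x * g x) else 1) := by
    intro k
    by_cases hk : k = i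
    · subst hk; simp [hij]
    · by_cases hk' : k = j
      · subst hk'; simp [hk]
      · simp [hk, hk', hP1]
  simp_rw [h2]
  rw [Finset.prod_mul_distrib]
  simp

private lemma sc_count {X : Type*} [Fintype X] {M : ℕ} (C : Fin M → X) (f : X → ℝ) :
    ∑ x, ((univ.filter fun k => C k = x).card : ℝ) * f x = ∑ k, f (C k) := by
  rw [← Finset.sum_fiberwise' univ C f]
  refine Finset.sum_congr rfl fun x _ => ?_
  rw [Finset.sum_const, nsmul_eq_mul]

private lemma sc_mean' {X : Type*} [Fintype X] {M : ℕ} (P g : X → ℝ)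
    (hP1 : ∑ x, P x = 1) :
    ∑ C : Fin M → X, (∏ k, P (C k)) * (∑ k, g (C k)) = M * ∑ x, P x * g x := by
  simp_rw [Finset.mul_sum]
  rw [Finset.sum_comm]
  have h1 : ∀ i : Fin M, ∑ C : Fin M → X, (∏ k, P (C k)) * g (C i) = ∑ x, P x * g x :=
    fun i => sc_marg1 P g hP1 i
  simp_rw [h1]
  rw [Finset.sum_const]
  simp only [Finset.card_univ, Fintype.card_fin, nsmul_eq_mul]
  rw [Finset.mul_sum]

private lemma sc_pairs {X : Type*} [Fintype X] {M : ℕ} (P g : X → ℝ)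
    (hP1 : ∑ x, P x = 1) :
    ∑ C : Fin M → X, (∏ k, P (C k)) * ((∑ k, g (C k)) * (∑ l, g (C l)))
      = (M : ℝ)^2 * (∑ x, P x * g x)^2
        + M * ((∑ x, P x * (g x * g x)) - (∑ x, P x * g x)^2) := by
  have h1 : ∀ C : Fin M → X, (∏ k, P (C k)) * ((∑ k, g (C k)) * (∑ l, g (C l)))
      = ∑ k, ∑ l, (∏ k', P (C k')) * (g (C k) * g (C l)) := by
    intro C
    rw [Finset.sum_mul_sum, Finset.mul_sum]
    exact Finset.sum_congr rfl fun k _ => Finset.mul_sum _ _ _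
  simp_rw [h1]
  rw [Finset.sum_comm]
  have h2 : ∀ k : Fin M, ∑ C : Fin M → X, ∑ l, (∏ k', P (C k')) * (g (C k) * g (C l))
      = ∑ l : Fin M, ∑ C : Fin M → X, (∏ k', P (C k')) * (g (C k) * g (C l)) :=
    fun k => Finset.sum_comm
  simp_rw [h2]
  have h3 : ∀ k l : Fin M, ∑ C : Fin M → X, (∏ k', P (C k')) * (g (C k) * g (C l))
      = if k = l then (∑ x, P x * (g x * g x)) else (∑ x, P x * g x) * (∑ x, P x * g x) := by
    intro k l
    by_cases hkl : k = l
    · subst hkl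
      rw [if_pos rfl]
      exact sc_marg1 P (fun x => g x * g x) hP1 k
    · rw [if_neg hkl]
      exact sc_marg2 P g g hP1 hkl
  simp_rw [h3]
  have h4 : ∀ k : Fin M, ∑ l : Fin M,
      (if k = l then (∑ x, P x * (g x * g x)) else (∑ x, P x * g x) * (∑ x, P x * g x))
      = (M : ℝ) * ((∑ x, P x * g x) * (∑ x, P x * g x))
        + ((∑ x, P x * (g x * g x)) - (∑ x, P x * g x) * (∑ x, P x * g x)) := by
    intro k
    have e : ∀ l : Fin M,
        (if k = l then (∑ x, P x * (g x * g x)) else (∑ x, P x * g x) * (∑ x, P x * g x))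
        = (∑ x, P x * g x) * (∑ x, P x * g x)
          + (if k = l then (∑ x, P x * (g x * g x)) - (∑ x, P x * g x) * (∑ x, P x * g x)
             else 0) := by
      intro l; by_cases h : k = l <;> simp [h]
    simp_rw [e]
    rw [Finset.sum_add_distrib, Finset.sum_const, Finset.sum_ite_eq]
    simp [nsmul_eq_mul]
  simp_rw [h4]
  rw [Finset.sum_const]
  simp only [Finset.card_univ, Fintype.card_fin, nsmul_eq_mul]
  ring

private lemma sc_per_y {X : Type*} [Fintype X] (P f : X → ℝ)
    (hP0 : ∀ x, 0 ≤ P x) (hP1 : ∑ x, P x = 1)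
    {M : ℕ} (hM : 0 < M) (R : ℝ) (hR0 : 0 ≤ R)
    (hR : ∑ x, P x * (f x * f x) ≤ R) :
    ∑ C : Fin M → X, (∏ k, P (C k)) * |(∑ k, f (C k)) / M - ∑ x, P x * f x|
      ≤ Real.sqrt (R / M) := by
  classical
  have hMR : (0:ℝ) < M := by exact_mod_cast hM
  have hQ0 : ∀ C : Fin M → X, 0 ≤ ∏ k, P (C k) :=
    fun C => Finset.prod_nonneg fun k _ => hP0 _
  have hQ1 := sc_marg0 (M := M) P hP1
  have hmean := sc_mean' (M := M) P f hP1
  have hpair := sc_pairs (M := M) P f hP1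
  set m := ∑ x, P x * f x with hm
  set S := ∑ x, P x * (f x * f x) with hS
  have hvar : ∑ C : Fin M → X, (∏ k, P (C k)) * ((∑ k, f (C k)) / M - m)^2
      = (S - m^2) / M := by
    have expand : ∀ C : Fin M → X, (∏ k, P (C k)) * ((∑ k, f (C k)) / M - m)^2
        = ((∏ k, P (C k)) * ((∑ k, f (C k)) * (∑ l, f (C l)))) / (M:ℝ)^2
          - (2*m/M) * ((∏ k, P (C k)) * (∑ k, f (C k))) + m^2 * (∏ k, P (C k)) := by
      intro C
      field_simp
      ring
    rw [Finset.sum_congr rfl fun C _ => expand C]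
    rw [Finset.sum_add_distrib, Finset.sum_sub_distrib, ← Finset.sum_div,
      ← Finset.mul_sum, ← Finset.mul_sum]
    rw [hpair, hmean, hQ1]
    field_simp
    ring
  have hnn : 0 ≤ ∑ C : Fin M → X, (∏ k, P (C k)) * |(∑ k, f (C k)) / M - m| :=
    Finset.sum_nonneg fun C _ => mul_nonneg (hQ0 C) (abs_nonneg _)
  have hcs : (∑ C : Fin M → X, (∏ k, P (C k)) * |(∑ k, f (C k)) / M - m|)^2
      ≤ (S - m^2) / M := by
    have h := Finset.sum_mul_sq_le_sq_mul_sq Finset.univ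
      (fun C : Fin M → X => Real.sqrt (∏ k, P (C k)))
      (fun C : Fin M → X => Real.sqrt (∏ k, P (C k)) * |(∑ k, f (C k)) / M - m|)
    have e1 : ∀ C : Fin M → X,
        Real.sqrt (∏ k, P (C k)) * (Real.sqrt (∏ k, P (C k)) * |(∑ k, f (C k)) / M - m|)
        = (∏ k, P (C k)) * |(∑ k, f (C k)) / M - m| := by
      intro C; rw [← mul_assoc, Real.mul_self_sqrt (hQ0 C)]
    have e2 : ∀ C : Fin M → X, (Real.sqrt (∏ k, P (C k)))^2 = ∏ k, P (C k) :=
      fun C => Real.sq_sqrt (hQ0 C)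
    have e3 : ∀ C : Fin M → X,
        (Real.sqrt (∏ k, P (C k)) * |(∑ k, f (C k)) / M - m|)^2
        = (∏ k, P (C k)) * ((∑ k, f (C k)) / M - m)^2 := by
      intro C; rw [mul_pow, Real.sq_sqrt (hQ0 C), sq_abs]
    simp_rw [e1, e2, e3] at h
    rw [hQ1, one_mul, hvar] at h
    exact h
  have hmono : (S - m^2) / M ≤ R / M := by
    refine (div_le_div_iff_of_pos_right hMR).mpr ?_
    nlinarith [sq_nonneg m]
  exact (Real.le_sqrt hnn (div_nonneg hR0 hMR.le)).mpr (hcs.trans hmono)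


private lemma sc_main {X Y : Type*} [Fintype X] [Fintype Y]
    (W WT Wc : X → Y → ℝ) (P : X → ℝ)
    (hP0 : ∀ x, 0 ≤ P x) (hP1 : ∑ x, P x = 1)
    (hW1 : ∀ x, ∑ y, W x y = 1)
    (hsplit : ∀ x y, W x y = WT x y + Wc x y)
    (hWT0 : ∀ x y, 0 ≤ WT x y) (hWc0 : ∀ x y, 0 ≤ Wc x y)
    (γ : ℝ) (M : ℕ) (hM : 0 < M)
    (hbound : ∀ y, ∑ x, P x * (WT x y * WT x y)
      ≤ Real.exp γ * ((∑ x', P x' * W x' y) * (∑ x', P x' * W x' y))) :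
    ∃ Pt : X → ℝ, (∀ x, 0 ≤ Pt x) ∧ (∑ x, Pt x = 1) ∧
      (∀ x, ∃ k : ℕ, k ≤ M ∧ Pt x = (k : ℝ) / M) ∧
      (1 / 2) * ∑ y, |(∑ x, Pt x * W x y) - ∑ x, P x * W x y|
        ≤ (∑ x, ∑ y, P x * Wc x y) + (1 / 2) * Real.sqrt (Real.exp γ / M) := by
  classical
  have hMR : (0:ℝ) < M := by exact_mod_cast hM
  have hQ0 : ∀ C : Fin M → X, 0 ≤ ∏ k, P (C k) :=
    fun C => Finset.prod_nonneg fun k _ => hP0 _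
  have hQ1 := sc_marg0 (M := M) P hP1
  have hW0 : ∀ x y, 0 ≤ W x y :=
    fun x y => (hsplit x y) ▸ add_nonneg (hWT0 x y) (hWc0 x y)
  have hPW0 : ∀ y, 0 ≤ ∑ x, P x * W x y :=
    fun y => Finset.sum_nonneg fun x _ => mul_nonneg (hP0 x) (hW0 x y)
  have hν0 : ∀ y, 0 ≤ ∑ x, P x * Wc x y :=
    fun y => Finset.sum_nonneg fun x _ => mul_nonneg (hP0 x) (hWc0 x y)
  have hPWsum : ∑ y, ∑ x, P x * W x y = 1 := by
    rw [Finset.sum_comm]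
    have : ∀ x : X, ∑ y, P x * W x y = P x := by
      intro x; rw [← Finset.mul_sum, hW1, mul_one]
    simp_rw [this]
    exact hP1
  -- expectation bound per y
  have key : ∀ y : Y,
      ∑ C : Fin M → X, (∏ k, P (C k)) * |(∑ k, W (C k) y)/M - ∑ x, P x * W x y|
      ≤ Real.sqrt (Real.exp γ / M) * (∑ x, P x * W x y) + 2 * ∑ x, P x * Wc x y := by
    intro y
    have hA := sc_per_y P (fun x => WT x y) hP0 hP1 hM
      (Real.exp γ * ((∑ x', P x' * W x' y) * (∑ x', P x' * W x' y)))
      (mul_nonneg (Real.exp_pos γ).le (mul_nonneg (hPW0 y) (hPW0 y))) (hbound y)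
    have hsqrt : Real.sqrt ((Real.exp γ * ((∑ x', P x' * W x' y) * (∑ x', P x' * W x' y))) / M)
        = Real.sqrt (Real.exp γ / M) * (∑ x', P x' * W x' y) := by
      rw [show (Real.exp γ * ((∑ x', P x' * W x' y) * (∑ x', P x' * W x' y))) / (M:ℝ)
          = (Real.exp γ / M) * (∑ x', P x' * W x' y)^2 by ring]
      rw [Real.sqrt_mul (by positivity), Real.sqrt_sq (hPW0 y)]
    rw [hsqrt] at hA
    have hB : ∑ C : Fin M → X, (∏ k, P (C k)) * ((∑ k, Wc (C k) y)/M)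
        = ∑ x, P x * Wc x y := by
      simp_rw [← mul_div_assoc]
      rw [← Finset.sum_div, sc_mean' (M := M) P (fun x => Wc x y) hP1,
        mul_div_cancel_left₀ _ (ne_of_gt hMR)]
    have hpoint : ∀ C : Fin M → X,
        |(∑ k, W (C k) y)/M - ∑ x, P x * W x y|
        ≤ |(∑ k, WT (C k) y)/M - ∑ x, P x * WT x y|
          + ((∑ k, Wc (C k) y)/M + ∑ x, P x * Wc x y) := by
      intro C
      have e1 : (∑ k, W (C k) y)/(M:ℝ) = (∑ k, WT (C k) y)/M + (∑ k, Wc (C k) y)/M := by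
        rw [← add_div, ← Finset.sum_add_distrib]
        congr 1
        exact Finset.sum_congr rfl fun k _ => hsplit (C k) y
      have e2 : ∑ x, P x * W x y = (∑ x, P x * WT x y) + ∑ x, P x * Wc x y := by
        rw [← Finset.sum_add_distrib]
        exact Finset.sum_congr rfl fun x _ => by rw [hsplit x y, mul_add]
      rw [e1, e2]
      have hBc : 0 ≤ (∑ k, Wc (C k) y)/(M:ℝ) := by
        apply div_nonneg _ hMR.le
        exact Finset.sum_nonneg fun k _ => hWc0 _ _
      have hνy := hν0 y
      calc |(∑ k, WT (C k) y)/(M:ℝ) + (∑ k, Wc (C k) y)/M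
              - ((∑ x, P x * WT x y) + ∑ x, P x * Wc x y)|
          = |((∑ k, WT (C k) y)/(M:ℝ) - ∑ x, P x * WT x y)
              + ((∑ k, Wc (C k) y)/(M:ℝ) - ∑ x, P x * Wc x y)| := by ring_nf
        _ ≤ |(∑ k, WT (C k) y)/(M:ℝ) - ∑ x, P x * WT x y|
              + |(∑ k, Wc (C k) y)/(M:ℝ) - ∑ x, P x * Wc x y| := abs_add_le _ _
        _ ≤ _ := by
              have h3 := abs_sub ((∑ k, Wc (C k) y)/(M:ℝ)) (∑ x, P x * Wc x y)
              rw [abs_of_nonneg hBc, abs_of_nonneg hνy] at h3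
              linarith
    calc ∑ C : Fin M → X, (∏ k, P (C k)) * |(∑ k, W (C k) y)/M - ∑ x, P x * W x y|
        ≤ ∑ C : Fin M → X, (∏ k, P (C k)) *
            (|(∑ k, WT (C k) y)/M - ∑ x, P x * WT x y|
              + ((∑ k, Wc (C k) y)/M + ∑ x, P x * Wc x y)) :=
          Finset.sum_le_sum fun C _ => mul_le_mul_of_nonneg_left (hpoint C) (hQ0 C)
      _ = (∑ C : Fin M → X, (∏ k, P (C k)) * |(∑ k, WT (C k) y)/M - ∑ x, P x * WT x y|)
            + ((∑ C : Fin M → X, (∏ k, P (C k)) * ((∑ k, Wc (C k) y)/M))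
              + (∑ C : Fin M → X, ∏ k, P (C k)) * ∑ x, P x * Wc x y) := by
          simp_rw [mul_add]
          rw [Finset.sum_add_distrib, Finset.sum_add_distrib, Finset.sum_mul]
      _ ≤ Real.sqrt (Real.exp γ / M) * (∑ x, P x * W x y) + 2 * ∑ x, P x * Wc x y := by
          rw [hB, hQ1, one_mul]
          linarith
  -- total expectation bound
  have hE : ∑ C : Fin M → X, (∏ k, P (C k)) *
      ((1/2) * ∑ y, |(∑ k, W (C k) y)/M - ∑ x, P x * W x y|)
      ≤ (∑ x, ∑ y, P x * Wc x y) + (1/2) * Real.sqrt (Real.exp γ / M) := by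
    have h1 : ∀ C : Fin M → X, (∏ k, P (C k)) *
        ((1/2) * ∑ y, |(∑ k, W (C k) y)/M - ∑ x, P x * W x y|)
        = ∑ y, (1/2) * ((∏ k, P (C k)) * |(∑ k, W (C k) y)/M - ∑ x, P x * W x y|) := by
      intro C
      rw [mul_left_comm, Finset.mul_sum, Finset.mul_sum]
    simp_rw [h1]
    rw [Finset.sum_comm]
    have h2 : ∀ y : Y, ∑ C : Fin M → X,
        (1/2) * ((∏ k, P (C k)) * |(∑ k, W (C k) y)/M - ∑ x, P x * W x y|)
        = (1/2) * ∑ C : Fin M → X,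
            (∏ k, P (C k)) * |(∑ k, W (C k) y)/M - ∑ x, P x * W x y| :=
      fun y => (Finset.mul_sum _ _ _).symm
    simp_rw [h2]
    calc ∑ y, (1/2) * ∑ C : Fin M → X,
          (∏ k, P (C k)) * |(∑ k, W (C k) y)/M - ∑ x, P x * W x y|
        ≤ ∑ y, (1/2) * (Real.sqrt (Real.exp γ / M) * (∑ x, P x * W x y)
            + 2 * ∑ x, P x * Wc x y) := by
          refine Finset.sum_le_sum fun y _ => ?_
          have := key y
          linarith
      _ = (1/2) * Real.sqrt (Real.exp γ / M) * (∑ y, ∑ x, P x * W x y)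
            + ∑ y, ∑ x, P x * Wc x y := by
          have e : ∀ y : Y, (1/2) * (Real.sqrt (Real.exp γ / M) * (∑ x, P x * W x y)
              + 2 * ∑ x, P x * Wc x y)
              = (1/2) * Real.sqrt (Real.exp γ / M) * (∑ x, P x * W x y)
                + ∑ x, P x * Wc x y := by intro y; ring
          simp_rw [e]
          rw [Finset.sum_add_distrib, ← Finset.mul_sum]
      _ = (∑ x, ∑ y, P x * Wc x y) + (1/2) * Real.sqrt (Real.exp γ / M) := by
          rw [hPWsum, mul_one, Finset.sum_comm]
          ring
  -- pick a good codebook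
  have hgood : ∃ C : Fin M → X,
      (1/2) * ∑ y, |(∑ k, W (C k) y)/M - ∑ x, P x * W x y|
        ≤ (∑ x, ∑ y, P x * Wc x y) + (1/2) * Real.sqrt (Real.exp γ / M) := by
    by_contra hcon
    push_neg at hcon
    have hexC : ∃ C : Fin M → X, 0 < ∏ k, P (C k) := by
      by_contra h2
      push_neg at h2
      have hz : ∑ C : Fin M → X, ∏ k, P (C k) = 0 :=
        Finset.sum_eq_zero fun C _ => le_antisymm (h2 C) (hQ0 C)
      rw [hQ1] at hz
      norm_num at hz
    obtain ⟨C0, hC0⟩ := hexC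
    have hlt : ∑ C : Fin M → X, (∏ k, P (C k)) *
        ((∑ x, ∑ y, P x * Wc x y) + (1/2) * Real.sqrt (Real.exp γ / M))
        < ∑ C : Fin M → X, (∏ k, P (C k)) *
            ((1/2) * ∑ y, |(∑ k, W (C k) y)/M - ∑ x, P x * W x y|) :=
      Finset.sum_lt_sum
        (fun C _ => mul_le_mul_of_nonneg_left (hcon C).le (hQ0 C))
        ⟨C0, Finset.mem_univ C0, mul_lt_mul_of_pos_left (hcon C0) hC0⟩
    rw [← Finset.sum_mul, hQ1, one_mul] at hlt
    exact absurd (hlt.trans_le hE) (lt_irrefl _)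
  obtain ⟨C, hC⟩ := hgood
  refine ⟨fun x => ((univ.filter fun k => C k = x).card : ℝ) / M, fun x => by positivity,
    ?_, fun x => ⟨(univ.filter fun k => C k = x).card, ?_, rfl⟩, ?_⟩
  · rw [← Finset.sum_div]
    have hc : ∑ x, ((univ.filter fun k => C k = x).card : ℝ) = M := by
      have h := sc_count C (fun _ => (1:ℝ))
      simpa using h
    rw [hc, div_self (ne_of_gt hMR)]
  · simpa using Finset.card_filter_le univ (fun k => C k = x)
  · have e : ∀ y : Y, ∑ x, (((univ.filter fun k => C k = x).card : ℝ) / M) * W x y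
        = (∑ k, W (C k) y) / M := by
      intro y
      simp_rw [div_mul_eq_mul_div]
      rw [← Finset.sum_div, sc_count C (fun x => W x y)]
    calc (1/2) * ∑ y, |(∑ x, (((univ.filter fun k => C k = x).card : ℝ) / M) * W x y)
            - ∑ x, P x * W x y|
        = (1/2) * ∑ y, |(∑ k, W (C k) y)/M - ∑ x, P x * W x y| := by
          congr 1
          exact Finset.sum_congr rfl fun y _ => by rw [e y]
      _ ≤ _ := hC

/-- Soft covering lemma (Hayashi/Oohama): for any real `γ`, input distribution `P`
and positive integer `M`, with `T = {(x,y) : log(W(y|x)/PW(y)) ≤ γ}`, there exists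
an `M`-type distribution `P̃` with
`d(P̃W, PW) ≤ (P × W)(Tᶜ) + (1/2)√(e^γ/M)`. -/
theorem soft_covering_hayashi {X Y : Type*} [Fintype X] [Fintype Y]
    (W : X → Y → ℝ) (hW0 : ∀ x y, 0 ≤ W x y) (hW1 : ∀ x, ∑ y, W x y = 1)
    (P : X → ℝ) (hP0 : ∀ x, 0 ≤ P x) (hP1 : ∑ x, P x = 1)
    (γ : ℝ) (M : ℕ) (hM : 0 < M) :
    ∃ Pt : X → ℝ, (∀ x, 0 ≤ Pt x) ∧ (∑ x, Pt x = 1) ∧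
      (∀ x, ∃ k : ℕ, k ≤ M ∧ Pt x = (k : ℝ) / M) ∧
      (1 / 2) * ∑ y, |(∑ x, Pt x * W x y) - ∑ x, P x * W x y|
        ≤ (∑ x, ∑ y, P x * W x y *
              (if γ < Real.log (W x y / ∑ x', P x' * W x' y) then 1 else 0))
          + (1 / 2) * Real.sqrt (Real.exp γ / M) := by
    classical
  have hbound : ∀ y : Y, ∑ x, P x *
      ((if γ < Real.log (W x y / ∑ x', P x' * W x' y) then 0 else W x y)
        * (if γ < Real.log (W x y / ∑ x', P x' * W x' y) then 0 else W x y))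
      ≤ Real.exp γ * ((∑ x', P x' * W x' y) * (∑ x', P x' * W x' y)) := by
    intro y
    have hPW0 : 0 ≤ ∑ x', P x' * W x' y :=
      Finset.sum_nonneg fun x' _ => mul_nonneg (hP0 x') (hW0 x' y)
    have hterm : ∀ x : X, P x *
        ((if γ < Real.log (W x y / ∑ x', P x' * W x' y) then 0 else W x y)
          * (if γ < Real.log (W x y / ∑ x', P x' * W x' y) then 0 else W x y))
        ≤ (Real.exp γ * ∑ x', P x' * W x' y) *
            (P x * (if γ < Real.log (W x y / ∑ x', P x' * W x' y) then 0 else W x y)) := by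
      intro x
      by_cases hc : γ < Real.log (W x y / ∑ x', P x' * W x' y)
      · simp [hc]
      · rw [if_neg hc]
        rcases eq_or_lt_of_le (hP0 x) with hPx | hPx
        · rw [← hPx]; simp
        rcases eq_or_lt_of_le (hW0 x y) with hWxy | hWxy
        · rw [← hWxy]; simp
        have hPWpos : 0 < ∑ x', P x' * W x' y :=
          lt_of_lt_of_le (mul_pos hPx hWxy)
            (Finset.single_le_sum (f := fun x' => P x' * W x' y)
              (fun x' _ => mul_nonneg (hP0 x') (hW0 x' y)) (Finset.mem_univ x))
        have hlog : Real.log (W x y / ∑ x', P x' * W x' y) ≤ γ := not_lt.1 hc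
        have hdiv : W x y / (∑ x', P x' * W x' y) ≤ Real.exp γ := by
          calc W x y / (∑ x', P x' * W x' y)
              = Real.exp (Real.log (W x y / ∑ x', P x' * W x' y)) :=
                (Real.exp_log (div_pos hWxy hPWpos)).symm
            _ ≤ Real.exp γ := Real.exp_le_exp.mpr hlog
        have hWle : W x y ≤ Real.exp γ * ∑ x', P x' * W x' y := (div_le_iff₀ hPWpos).1 hdiv
        have h5 := mul_le_mul_of_nonneg_left hWle (mul_nonneg (hP0 x) hWxy.le)
        nlinarith [h5]
    calc ∑ x, P x *
        ((if γ < Real.log (W x y / ∑ x', P x' * W x' y) then 0 else W x y)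
          * (if γ < Real.log (W x y / ∑ x', P x' * W x' y) then 0 else W x y))
        ≤ ∑ x, (Real.exp γ * ∑ x', P x' * W x' y) *
            (P x * (if γ < Real.log (W x y / ∑ x', P x' * W x' y) then 0 else W x y)) :=
          Finset.sum_le_sum fun x _ => hterm x
      _ = (Real.exp γ * ∑ x', P x' * W x' y) *
            ∑ x, P x * (if γ < Real.log (W x y / ∑ x', P x' * W x' y) then 0 else W x y) :=
          (Finset.mul_sum _ _ _).symm
      _ ≤ (Real.exp γ * ∑ x', P x' * W x' y) * ∑ x', P x' * W x' y := by
          refine mul_le_mul_of_nonneg_left ?_ (by positivity)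
          refine Finset.sum_le_sum fun x _ => mul_le_mul_of_nonneg_left ?_ (hP0 x)
          by_cases hc : γ < Real.log (W x y / ∑ x', P x' * W x' y)
          · simp [hc, hW0 x y]
          · simp [hc]
      _ = Real.exp γ * ((∑ x', P x' * W x' y) * (∑ x', P x' * W x' y)) := by ring
  obtain ⟨Pt, h1, h2, h3, h4⟩ := sc_main W
    (fun x y => if γ < Real.log (W x y / ∑ x', P x' * W x' y) then 0 else W x y)
    (fun x y => if γ < Real.log (W x y / ∑ x', P x' * W x' y) then W x y else 0)
    P hP0 hP1 hW1
    (fun x y => by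
      by_cases h : γ < Real.log (W x y / ∑ x', P x' * W x' y) <;> simp [h])
    (fun x y => by
      by_cases h : γ < Real.log (W x y / ∑ x', P x' * W x' y) <;> simp [h, hW0 x y])
    (fun x y => by
      by_cases h : γ < Real.log (W x y / ∑ x', P x' * W x' y) <;> simp [h, hW0 x y])
    γ M hM hbound
  refine ⟨Pt, h1, h2, h3, ?_⟩
  have e : (∑ x, ∑ y, P x *
      (if γ < Real.log (W x y / ∑ x', P x' * W x' y) then W x y else 0))
      = ∑ x, ∑ y, P x * W x y *
          (if γ < Real.log (W x y / ∑ x', P x' * W x' y) then 1 else 0) := by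
    refine Finset.sum_congr rfl fun x _ => Finset.sum_congr rfl fun y _ => ?_
    by_cases h : γ < Real.log (W x y / ∑ x', P x' * W x' y) <;> simp [h]
  rw [← e]
  exact h4
end

section
/- (Hayashi's ID error bound) Let γ ∈ ℝ and for each input distribution P set T_P(γ) = {(x,y): log(W(y|x)/PW(y)) ≤ γ}. For any integer M, any (N, ε, δ)-identification code with N > |X|^M must satisfy ε + δ ≥ inf_P {1 − 2·(P × W)(T_P(γ)^c)} − √(e^γ / M). -/
/-!
Draw a codebook `f : Fin M → X` i.i.d. from `P` and compare the empirical output distribution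
`(1/M) ∑ₖ W(f k)` with `PW`. Cutting `W` down to the region `log (W/PW) ≤ γ` costs the tail mass
`(P × W)(T_P(γ)ᶜ)` once on each side and leaves a channel bounded by `e^γ PW`,
whose empirical mean has variance at most `e^γ PW(y)² / M`. Cauchy–Schwarz then shows that some
codebook is within `2 (P × W)(T_P(γ)ᶜ) + √(e^γ/M)` of `PW` in `ℓ¹` (soft covering). There are only
`|X|^M` codebooks, so two messages `i ≠ j` of an ID code with `N > |X|^M` share one; then `P_iW`
and `P_jW` are close in total variation, which bounds `1 - ε - δ ≤ P_iW(D_i) - P_jW(D_i)`.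
-/

open scoped BigOperators Classical

open Finset

section IID

variable {X : Type*} [Fintype X] {M : ℕ} {p : X → ℝ}

noncomputable def iidExpectation (p : X → ℝ) (M : ℕ) (G : (Fin M → X) → ℝ) : ℝ :=
  ∑ f : Fin M → X, (∏ i, p (f i)) * G f

noncomputable def empiricalMean (f : Fin M → X) (g : X → ℝ) : ℝ :=
  (M : ℝ)⁻¹ * ∑ k, g (f k)

lemma iidExpectation_add (G H : (Fin M → X) → ℝ) :
    iidExpectation p M (fun f => G f + H f) = iidExpectation p M G + iidExpectation p M H := by
  simp only [iidExpectation, mul_add, sum_add_distrib]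

lemma iidExpectation_const_mul (c : ℝ) (G : (Fin M → X) → ℝ) :
    iidExpectation p M (fun f => c * G f) = c * iidExpectation p M G := by
  simp only [iidExpectation, mul_sum, mul_left_comm]

lemma iidExpectation_sum {ι : Type*} (s : Finset ι) (G : ι → (Fin M → X) → ℝ) :
    iidExpectation p M (fun f => ∑ i ∈ s, G i f) = ∑ i ∈ s, iidExpectation p M (G i) := by
  simp only [iidExpectation, mul_sum]
  exact sum_comm

lemma iidExpectation_mono (hp0 : ∀ x, 0 ≤ p x) {G H : (Fin M → X) → ℝ} (hGH : G ≤ H) :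
    iidExpectation p M G ≤ iidExpectation p M H :=
  sum_le_sum fun f _ => mul_le_mul_of_nonneg_left (hGH f) (prod_nonneg fun _ _ => hp0 _)

lemma iidExpectation_prod (g : Fin M → X → ℝ) :
    iidExpectation p M (fun f => ∏ i, g i (f i)) = ∏ i, ∑ x, p x * g i x := by
  rw [Fintype.prod_sum]
  simp only [iidExpectation, prod_mul_distrib]

lemma iidExpectation_const (hp1 : ∑ x, p x = 1) (c : ℝ) :
    iidExpectation p M (fun _ => c) = c := by
  rw [iidExpectation, ← sum_mul, ← Fintype.prod_sum, hp1, prod_const_one, one_mul]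

lemma iidExpectation_apply (hp1 : ∑ x, p x = 1) (k : Fin M) (g : X → ℝ) :
    iidExpectation p M (fun f => g (f k)) = ∑ x, p x * g x :=
  calc iidExpectation p M (fun f => g (f k))
      = iidExpectation p M (fun f => ∏ i, Function.update (1 : Fin M → X → ℝ) k g i (f i)) := by
        congr 1; funext f
        rw [Fintype.prod_eq_single k fun i hi => by simp [hi]]
        simp
    _ = ∏ i, ∑ x, p x * Function.update (1 : Fin M → X → ℝ) k g i x := iidExpectation_prod _
    _ = ∑ x, p x * g x := by
        rw [Fintype.prod_eq_single k fun i hi => by simp [hi, hp1]]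
        simp

lemma iidExpectation_apply_mul_apply (hp1 : ∑ x, p x = 1) {j k : Fin M} (hjk : j ≠ k)
    (g h : X → ℝ) :
    iidExpectation p M (fun f => g (f j) * h (f k)) = (∑ x, p x * g x) * ∑ x, p x * h x :=
  calc iidExpectation p M (fun f => g (f j) * h (f k))
      = iidExpectation p M (fun f =>
          ∏ i, Function.update (Function.update (1 : Fin M → X → ℝ) j g) k h i (f i)) := by
        congr 1; funext f
        rw [Fintype.prod_eq_mul j k hjk fun i hi => by simp [hi]]
        simp [hjk]
    _ = ∏ i, ∑ x, p x * Function.update (Function.update (1 : Fin M → X → ℝ) j g) k h i x :=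
        iidExpectation_prod _
    _ = (∑ x, p x * g x) * ∑ x, p x * h x := by
        rw [Fintype.prod_eq_mul j k hjk fun i hi => by simp [hi, hp1]]
        simp [hjk]

lemma sq_iidExpectation_le (hp0 : ∀ x, 0 ≤ p x) (hp1 : ∑ x, p x = 1)
    (G : (Fin M → X) → ℝ) : iidExpectation p M G ^ 2 ≤ iidExpectation p M (fun f => G f ^ 2) :=
  (even_two.convexOn_pow (𝕜 := ℝ)).map_sum_le (fun _ _ => prod_nonneg fun _ _ => hp0 _)
    (by simpa [iidExpectation] using iidExpectation_const (M := M) hp1 1)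
    (fun _ _ => Set.mem_univ _)

lemma exists_le_of_iidExpectation_le (hp0 : ∀ x, 0 ≤ p x) (hp1 : ∑ x, p x = 1)
    {G : (Fin M → X) → ℝ} {B : ℝ}
    (hG : iidExpectation p M G ≤ B) : ∃ f, G f ≤ B := by
  have : Nonempty X := by
    by_contra hX
    simp [not_nonempty_iff.1 hX] at hp1
  obtain ⟨f₀, hf₀⟩ := Finite.exists_min G
  refine ⟨f₀, le_trans ?_ hG⟩
  calc G f₀ = iidExpectation p M (fun _ => G f₀) := (iidExpectation_const hp1 _).symm
    _ ≤ iidExpectation p M G := iidExpectation_mono hp0 hf₀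

lemma iidExpectation_empiricalMean (hM : 0 < M) (hp1 : ∑ x, p x = 1) (g : X → ℝ) :
    iidExpectation p M (fun f => empiricalMean f g) = ∑ x, p x * g x := by
  simp only [empiricalMean, iidExpectation_const_mul,
    iidExpectation_sum univ (fun k f => g (f k)), iidExpectation_apply hp1]
  simp [hM.ne']

lemma iidExpectation_sq_sum_of_mean_zero (hp1 : ∑ x, p x = 1) {Z : X → ℝ}
    (hZ : ∑ x, p x * Z x = 0) :
    iidExpectation p M (fun f => (∑ k, Z (f k)) ^ 2) = M * ∑ x, p x * Z x ^ 2 := by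
  have hjk (j k : Fin M) : iidExpectation p M (fun f => Z (f j) * Z (f k))
      = if j = k then ∑ x, p x * Z x ^ 2 else 0 := by
    split_ifs with h
    · subst h; simpa only [← sq] using iidExpectation_apply hp1 j (fun x => Z x ^ 2)
    · rw [iidExpectation_apply_mul_apply hp1 h, hZ, zero_mul]
  simp only [sq, sum_mul_sum, iidExpectation_sum, hjk]
  simp

lemma iidExpectation_sq_empiricalMean_sub_le (hM : 0 < M) (hp1 : ∑ x, p x = 1) (g : X → ℝ) :
    iidExpectation p M (fun f => (empiricalMean f g - ∑ x, p x * g x) ^ 2)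
      ≤ (∑ x, p x * g x ^ 2) / M := by
  set m := ∑ x, p x * g x with hm
  have hZ : ∑ x, p x * (g x - m) = 0 := by
    simp only [mul_sub, sum_sub_distrib, ← sum_mul, hp1, one_mul]
    exact sub_self m
  have hcenter (f : Fin M → X) :
      (empiricalMean f g - m) ^ 2 = ((M : ℝ)⁻¹) ^ 2 * (∑ k, (g (f k) - m)) ^ 2 := by
    simp only [empiricalMean, sum_sub_distrib, sum_const, card_univ, Fintype.card_fin,
      nsmul_eq_mul]
    field_simp
  have hvar : ∑ x, p x * (g x - m) ^ 2 = ∑ x, p x * g x ^ 2 - m ^ 2 := by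
    have hexpand (x : X) :
        p x * (g x - m) ^ 2 = p x * g x ^ 2 - 2 * m * (p x * g x) + m ^ 2 * p x := by
      ring
    simp only [hexpand, sum_add_distrib, sum_sub_distrib, ← mul_sum, ← hm, hp1]
    ring
  simp only [hcenter, iidExpectation_const_mul, iidExpectation_sq_sum_of_mean_zero hp1 hZ, hvar]
  rw [show ((M : ℝ)⁻¹) ^ 2 * (M * (∑ x, p x * g x ^ 2 - m ^ 2))
      = (∑ x, p x * g x ^ 2 - m ^ 2) / M by field_simp]
  gcongr
  linarith [sq_nonneg m]

lemma iidExpectation_abs_empiricalMean_sub_le (hM : 0 < M) (hp0 : ∀ x, 0 ≤ p x)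
    (hp1 : ∑ x, p x = 1) (g : X → ℝ) :
    iidExpectation p M (fun f => |empiricalMean f g - ∑ x, p x * g x|)
      ≤ √((∑ x, p x * g x ^ 2) / M) :=
  (le_abs_self _).trans <| Real.abs_le_sqrt <| (sq_iidExpectation_le hp0 hp1 _).trans <| by
    simpa only [sq_abs] using iidExpectation_sq_empiricalMean_sub_le hM hp1 g

end IID

lemma sum_sub_sum_le_half_sum_abs_sub {Y : Type*} [Fintype Y] {a b : Y → ℝ}
    (hab : ∑ y, a y = ∑ y, b y) (E : Finset Y) :
    ∑ y ∈ E, a y - ∑ y ∈ E, b y ≤ (∑ y, |a y - b y|) / 2 := by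
  have hE : ∑ y ∈ E, (a y - b y) = -∑ y ∈ Eᶜ, (a y - b y) := by
    rw [eq_neg_iff_add_eq_zero, sum_add_sum_compl, sum_sub_distrib, hab, sub_self]
  have hin : ∑ y ∈ E, (a y - b y) ≤ ∑ y ∈ E, |a y - b y| := sum_le_sum fun y _ => le_abs_self _
  have hout : -∑ y ∈ Eᶜ, (a y - b y) ≤ ∑ y ∈ Eᶜ, |a y - b y| := by
    rw [← sum_neg_distrib]; exact sum_le_sum fun y _ => neg_le_abs _
  rw [← sum_add_sum_compl E, ← sum_sub_distrib]
  linarith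

section Channel

variable {X Y : Type*} [Fintype X] {W : X → Y → ℝ} {p : X → ℝ} {γ : ℝ}

variable (W p) in
noncomputable def outputDist (y : Y) : ℝ := ∑ x, p x * W x y

-- The paper's `(P × W)(T_P(γ)ᶜ)`.
variable (W p γ) in
noncomputable def tailMass [Fintype Y] : ℝ :=
  ∑ x, ∑ y, p x * W x y * (if γ < Real.log (W x y / outputDist W p y) then 1 else 0)

variable (W p γ) in
noncomputable def truncatedChannel (x : X) (y : Y) : ℝ :=
  if γ < Real.log (W x y / outputDist W p y) then 0 else W x y

lemma outputDist_nonneg (hW0 : ∀ x y, 0 ≤ W x y) (hp0 : ∀ x, 0 ≤ p x) (y : Y) :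
    0 ≤ outputDist W p y :=
  sum_nonneg fun x _ => mul_nonneg (hp0 x) (hW0 x y)

lemma sum_outputDist [Fintype Y] (hW1 : ∀ x, ∑ y, W x y = 1) (hp1 : ∑ x, p x = 1) :
    ∑ y, outputDist W p y = 1 := by
  simp only [outputDist]
  rw [sum_comm]
  simp only [← mul_sum, hW1, mul_one, hp1]

lemma truncatedChannel_nonneg (hW0 : ∀ x y, 0 ≤ W x y) (x : X) (y : Y) :
    0 ≤ truncatedChannel W p γ x y := by
  unfold truncatedChannel; split_ifs <;> simp [hW0]

lemma truncatedChannel_le (hW0 : ∀ x y, 0 ≤ W x y) (x : X) (y : Y) :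
    truncatedChannel W p γ x y ≤ W x y := by
  unfold truncatedChannel; split_ifs <;> simp [hW0]

lemma truncatedChannel_le_exp_mul_outputDist (hW0 : ∀ x y, 0 ≤ W x y) (hp0 : ∀ x, 0 ≤ p x)
    {x : X} (hx : 0 < p x) (y : Y) :
    truncatedChannel W p γ x y ≤ Real.exp γ * outputDist W p y := by
  have hbound : 0 ≤ Real.exp γ * outputDist W p y :=
    mul_nonneg (Real.exp_pos γ).le (outputDist_nonneg hW0 hp0 y)
  unfold truncatedChannel
  split_ifs with hγ
  · exact hbound
  rcases (hW0 x y).eq_or_lt with hW | hW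
  · rwa [← hW]
  have hPW : 0 < outputDist W p y :=
    (mul_pos hx hW).trans_le <| single_le_sum (f := fun x => p x * W x y)
      (fun x _ => mul_nonneg (hp0 x) (hW0 x y)) (mem_univ x)
  rw [← div_le_iff₀ hPW]
  exact (Real.log_le_iff_le_exp (div_pos hW hPW)).1 (not_lt.1 hγ)

lemma tailMass_eq_sum_sub_outputDist_truncatedChannel [Fintype Y] :
    tailMass W p γ = ∑ y, (outputDist W p y - outputDist (truncatedChannel W p γ) p y) := by
  have htail (x : X) (y : Y) :
      p x * W x y * (if γ < Real.log (W x y / outputDist W p y) then 1 else 0)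
        = p x * W x y - p x * truncatedChannel W p γ x y := by
    unfold truncatedChannel; split_ifs <;> ring
  simp only [tailMass, htail]
  rw [sum_comm]
  simp only [outputDist, sum_sub_distrib]

lemma tailMass_le_one [Fintype Y] (hW0 : ∀ x y, 0 ≤ W x y) (hW1 : ∀ x, ∑ y, W x y = 1)
    (hp0 : ∀ x, 0 ≤ p x) (hp1 : ∑ x, p x = 1) : tailMass W p γ ≤ 1 := by
  rw [tailMass_eq_sum_sub_outputDist_truncatedChannel, sum_sub_distrib,
    sum_outputDist hW1 hp1, sub_le_self_iff]
  exact sum_nonneg fun y _ => outputDist_nonneg (truncatedChannel_nonneg hW0) hp0 y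

lemma sum_mul_truncatedChannel_sq_le (hW0 : ∀ x y, 0 ≤ W x y) (hp0 : ∀ x, 0 ≤ p x) (y : Y) :
    ∑ x, p x * truncatedChannel W p γ x y ^ 2 ≤ Real.exp γ * outputDist W p y ^ 2 := by
  calc ∑ x, p x * truncatedChannel W p γ x y ^ 2
      ≤ ∑ x, Real.exp γ * outputDist W p y * (p x * W x y) := sum_le_sum fun x _ => ?_
    _ = Real.exp γ * outputDist W p y ^ 2 := by rw [← mul_sum, sq, outputDist]; ring
  rcases (hp0 x).eq_or_lt with hx | hx
  · simp [← hx]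
  calc p x * truncatedChannel W p γ x y ^ 2
      = p x * (truncatedChannel W p γ x y * truncatedChannel W p γ x y) := by ring
    _ ≤ p x * (Real.exp γ * outputDist W p y * W x y) :=
        mul_le_mul_of_nonneg_left (mul_le_mul (truncatedChannel_le_exp_mul_outputDist hW0 hp0 hx y)
          (truncatedChannel_le hW0 x y) (truncatedChannel_nonneg hW0 x y)
          (mul_nonneg (Real.exp_pos γ).le (outputDist_nonneg hW0 hp0 y))) hx.le
    _ = Real.exp γ * outputDist W p y * (p x * W x y) := by ring

lemma iidExpectation_abs_empiricalMean_sub_outputDist_le {M : ℕ} (hM : 0 < M)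
    (hW0 : ∀ x y, 0 ≤ W x y) (hp0 : ∀ x, 0 ≤ p x) (hp1 : ∑ x, p x = 1) (y : Y) :
    iidExpectation p M (fun f => |empiricalMean f (W · y) - outputDist W p y|)
      ≤ 2 * (outputDist W p y - outputDist (truncatedChannel W p γ) p y)
        + outputDist W p y * √(Real.exp γ / M) := by
  set V := truncatedChannel W p γ
  have hVW : outputDist V p y ≤ outputDist W p y :=
    sum_le_sum fun x _ => mul_le_mul_of_nonneg_left (truncatedChannel_le hW0 x y) (hp0 x)
  have hsplit (f : Fin M → X) : |empiricalMean f (W · y) - outputDist W p y|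
      ≤ empiricalMean f (fun x => W x y - V x y) + |empiricalMean f (V · y) - outputDist V p y|
        + (outputDist W p y - outputDist V p y) := by
    have htail : 0 ≤ empiricalMean f (fun x => W x y - V x y) :=
      mul_nonneg (by positivity) (sum_nonneg fun k _ => sub_nonneg.2 (truncatedChannel_le hW0 _ y))
    have hmean : empiricalMean f (W · y)
        = empiricalMean f (fun x => W x y - V x y) + empiricalMean f (V · y) := by
      simp only [empiricalMean, ← mul_add, ← sum_add_distrib, sub_add_cancel]
    rw [hmean, abs_le]
    constructor <;>
      linarith [le_abs_self (empiricalMean f (V · y) - outputDist V p y),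
        neg_abs_le (empiricalMean f (V · y) - outputDist V p y)]
  have hdev : iidExpectation p M (fun f => |empiricalMean f (V · y) - outputDist V p y|)
      ≤ outputDist W p y * √(Real.exp γ / M) := by
    rw [← Real.sqrt_sq (outputDist_nonneg hW0 hp0 y), ← Real.sqrt_mul (sq_nonneg _),
      ← mul_div_assoc, mul_comm (_ ^ 2)]
    exact (iidExpectation_abs_empiricalMean_sub_le hM hp0 hp1 _).trans <| Real.sqrt_le_sqrt <|
      div_le_div_of_nonneg_right (sum_mul_truncatedChannel_sq_le hW0 hp0 y) (Nat.cast_nonneg M)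
  calc iidExpectation p M (fun f => |empiricalMean f (W · y) - outputDist W p y|)
      ≤ iidExpectation p M (fun f => empiricalMean f (fun x => W x y - V x y)
          + |empiricalMean f (V · y) - outputDist V p y|
          + (outputDist W p y - outputDist V p y)) := iidExpectation_mono hp0 hsplit
    _ = (outputDist W p y - outputDist V p y)
          + iidExpectation p M (fun f => |empiricalMean f (V · y) - outputDist V p y|)
          + (outputDist W p y - outputDist V p y) := by
        rw [iidExpectation_add, iidExpectation_add, iidExpectation_const hp1,
          iidExpectation_empiricalMean hM hp1]
        simp only [outputDist, mul_sub, sum_sub_distrib]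
    _ ≤ _ := by linarith

lemma iidExpectation_sum_abs_empiricalMean_sub_outputDist_le [Fintype Y] {M : ℕ} (hM : 0 < M)
    (hW0 : ∀ x y, 0 ≤ W x y) (hW1 : ∀ x, ∑ y, W x y = 1) (hp0 : ∀ x, 0 ≤ p x)
    (hp1 : ∑ x, p x = 1) :
    iidExpectation p M (fun f => ∑ y, |empiricalMean f (W · y) - outputDist W p y|)
      ≤ 2 * tailMass W p γ + √(Real.exp γ / M) := by
  rw [iidExpectation_sum, tailMass_eq_sum_sub_outputDist_truncatedChannel, mul_sum]
  calc _ ≤ ∑ y, (2 * (outputDist W p y - outputDist (truncatedChannel W p γ) p y)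
          + outputDist W p y * √(Real.exp γ / M)) :=
        sum_le_sum fun y _ => iidExpectation_abs_empiricalMean_sub_outputDist_le hM hW0 hp0 hp1 y
    _ = _ := by rw [sum_add_distrib, ← sum_mul, sum_outputDist hW1 hp1, one_mul]

theorem exists_sum_abs_empiricalMean_sub_outputDist_le [Fintype Y] {M : ℕ} (hM : 0 < M)
    (hW0 : ∀ x y, 0 ≤ W x y) (hW1 : ∀ x, ∑ y, W x y = 1) (hp0 : ∀ x, 0 ≤ p x)
    (hp1 : ∑ x, p x = 1) :
    ∃ f : Fin M → X, ∑ y, |empiricalMean f (W · y) - outputDist W p y|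
      ≤ 2 * tailMass W p γ + √(Real.exp γ / M) :=
  exists_le_of_iidExpectation_le hp0 hp1
    (iidExpectation_sum_abs_empiricalMean_sub_outputDist_le hM hW0 hW1 hp0 hp1)

lemma iInf_one_sub_two_mul_tailMass_le [Fintype Y] (hW0 : ∀ x y, 0 ≤ W x y)
    (hW1 : ∀ x, ∑ y, W x y = 1) (hp0 : ∀ x, 0 ≤ p x) (hp1 : ∑ x, p x = 1) :
    ⨅ Q : stdSimplex ℝ X, (1 - 2 * tailMass W Q γ) ≤ 1 - 2 * tailMass W p γ := by
  refine ciInf_le ⟨-1, ?_⟩ (⟨p, hp0, hp1⟩ : stdSimplex ℝ X)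
  rintro _ ⟨Q, rfl⟩
  linarith [tailMass_le_one (γ := γ) hW0 hW1 (stdSimplex.zero_le Q) (stdSimplex.sum_eq_one Q)]

end Channel

theorem hayashi_id_error_bound_general {X Y : Type*} [Fintype X] [Fintype Y]
    (W : X → Y → ℝ) (hW0 : ∀ x y, 0 ≤ W x y) (hW1 : ∀ x, ∑ y, W x y = 1)
    (γ : ℝ) (M : ℕ) (hM : 0 < M)
    (N : ℕ) (hN : Fintype.card X ^ M < N)
    (ε δ : ℝ)
    (P : Fin N → X → ℝ) (hP0 : ∀ i x, 0 ≤ P i x) (hP1 : ∀ i, ∑ x, P i x = 1)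
    (D : Fin N → Finset Y)
    (hTypeI : ∀ i, 1 - ε ≤ ∑ y ∈ D i, ∑ x, P i x * W x y)
    (hTypeII : ∀ i j, i ≠ j → ∑ y ∈ D i, ∑ x, P j x * W x y ≤ δ) :
    (⨅ Q : {p : X → ℝ // (∀ x, 0 ≤ p x) ∧ ∑ x, p x = 1},
        (1 - 2 * ∑ x, ∑ y, Q.1 x * W x y *
          (if γ < Real.log (W x y / ∑ x', Q.1 x' * W x' y) then 1 else 0)))
      - Real.sqrt (Real.exp γ / M) ≤ ε + δ := by
  change (⨅ Q : stdSimplex ℝ X, (1 - 2 * tailMass W Q γ)) - √(Real.exp γ / M) ≤ ε + δ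
  choose F hF using fun i =>
    exists_sum_abs_empiricalMean_sub_outputDist_le (γ := γ) hM hW0 hW1 (hP0 i) (hP1 i)
  obtain ⟨i, j, hij, hFij⟩ := Fintype.exists_ne_map_eq_of_card_lt F (by simpa using hN)
  have hdist : ∑ y, |outputDist W (P i) y - outputDist W (P j) y|
      ≤ 2 * tailMass W (P i) γ + 2 * tailMass W (P j) γ + 2 * √(Real.exp γ / M) := by
    calc _ ≤ ∑ y, (|outputDist W (P i) y - empiricalMean (F i) (W · y)|
          + |empiricalMean (F i) (W · y) - outputDist W (P j) y|) :=
          sum_le_sum fun y _ => abs_sub_le _ _ _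
      _ ≤ _ := by
          simp only [sum_add_distrib, abs_sub_comm (outputDist W (P i) _)]
          linarith [hF i, hFij ▸ hF j]
  have hTV := sum_sub_sum_le_half_sum_abs_sub
    ((sum_outputDist hW1 (hP1 i)).trans (sum_outputDist hW1 (hP1 j)).symm) (D i)
  have hI : 1 - ε ≤ ∑ y ∈ D i, outputDist W (P i) y := hTypeI i
  have hII : ∑ y ∈ D i, outputDist W (P j) y ≤ δ := hTypeII i j hij
  linarith [iInf_one_sub_two_mul_tailMass_le (γ := γ) hW0 hW1 (hP0 i) (hP1 i),
    iInf_one_sub_two_mul_tailMass_le (γ := γ) hW0 hW1 (hP0 j) (hP1 j)]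

/-- Hayashi's ID error bound: with `T_P(γ) = {(x,y) : log(W(y|x)/PW(y)) ≤ γ}`,
any `(N, ε, δ)`-identification code with `N > |X|^M` satisfies
`ε + δ ≥ inf_P {1 − 2(P × W)(T_P(γ)ᶜ)} − √(e^γ/M)`. -/
theorem hayashi_id_error_bound {X Y : Type*} [Fintype X] [Fintype Y]
    [Nonempty X] [Nonempty Y]
    (W : X → Y → ℝ) (hW0 : ∀ x y, 0 ≤ W x y) (hW1 : ∀ x, ∑ y, W x y = 1)
    (γ : ℝ) (M : ℕ) (hM : 0 < M)
    (N : ℕ) (hN : Fintype.card X ^ M < N)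
    (ε δ : ℝ)
    (P : Fin N → X → ℝ) (hP0 : ∀ i x, 0 ≤ P i x) (hP1 : ∀ i, ∑ x, P i x = 1)
    (D : Fin N → Finset Y)
    (hTypeI : ∀ i, 1 - ε ≤ ∑ y ∈ D i, ∑ x, P i x * W x y)
    (hTypeII : ∀ i j, i ≠ j → ∑ y ∈ D i, ∑ x, P j x * W x y ≤ δ) :
    (⨅ Q : {p : X → ℝ // (∀ x, 0 ≤ p x) ∧ ∑ x, p x = 1},
        (1 - 2 * ∑ x, ∑ y, Q.1 x * W x y *
          (if γ < Real.log (W x y / ∑ x', Q.1 x' * W x' y) then 1 else 0)))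
      - Real.sqrt (Real.exp γ / M) ≤ ε + δ :=
  hayashi_id_error_bound_general W hW0 hW1 γ M hM N hN ε δ P hP0 hP1 D hTypeI hTypeII
end

section
/- (Shannon's lemma / saddle point) For a DMC W with capacity C = max_P I(P, W) and capacity-achieving output distribution P*_Y, it holds that D(W(·|x) ‖ P*_Y) ≤ C for every input symbol x ∈ X. -/
open scoped BigOperators

/-- Shannon's lemma (saddle point): for a DMC `W` with capacity
`C = max_P I(P,W)` and capacity-achieving output distribution `P*_Y`,
`D(W(·|x) ‖ P*_Y) ≤ C` for every input symbol `x`. -/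
theorem shannon_lemma {X Y : Type*} [Fintype X] [Fintype Y] [Nonempty X]
    (W : X → Y → ℝ) (hW0 : ∀ x y, 0 ≤ W x y) (hW1 : ∀ x, ∑ y, W x y = 1)
    (I : (X → ℝ) → ℝ)
    (hI : ∀ P, I P = ∑ x, ∑ y, P x * W x y *
      Real.log (W x y / ∑ x', P x' * W x' y))
    (Pstar : X → ℝ) (hPs0 : ∀ x, 0 ≤ Pstar x) (hPs1 : ∑ x, Pstar x = 1)
    (hmax : ∀ P : X → ℝ, (∀ x, 0 ≤ P x) → (∑ x, P x = 1) → I P ≤ I Pstar)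
    (PY : Y → ℝ) (hPY : ∀ y, PY y = ∑ x, Pstar x * W x y)
    (hsupp : ∀ x y, 0 < W x y → 0 < PY y) :
    ∀ x : X, ∑ y, W x y * Real.log (W x y / PY y) ≤ I Pstar := by
  classical
  intro x0
  set D := ∑ y, W x0 y * Real.log (W x0 y / PY y) with hD
  set K := ∑ y, W x0 y * (W x0 y / PY y) with hK
  clear_value D K
  have hPY0 : ∀ y, 0 ≤ PY y := fun y => by
    rw [hPY]; exact Finset.sum_nonneg fun u _ => mul_nonneg (hPs0 u) (hW0 u y)
  have hPYsum : ∑ y, PY y = 1 := by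
    simp_rw [hPY]
    rw [Finset.sum_comm]
    simp_rw [← Finset.mul_sum, hW1, mul_one]
    exact hPs1
  have hzero : ∀ y, PY y = 0 → W x0 y = 0 := by
    intro y h
    by_contra hne
    have := hsupp x0 y (lt_of_le_of_ne (hW0 x0 y) (Ne.symm hne))
    linarith
  have main : ∀ l : ℝ, 0 < l → l < 1 → D ≤ I Pstar + l * (K - 1) := by
    intro l hl0 hl1
    have h1l : 0 < 1 - l := by linarith
    set P : X → ℝ := fun u => (1 - l) * Pstar u + l * (if u = x0 then 1 else 0) with hPdef
    set Q : Y → ℝ := fun y => (1 - l) * PY y + l * W x0 y with hQdef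
    clear_value P Q
    have hP0 : ∀ u, 0 ≤ P u := by
      intro u
      have h1 : (0:ℝ) ≤ (if u = x0 then (1:ℝ) else 0) := by split <;> norm_num
      have h2 := mul_nonneg h1l.le (hPs0 u)
      have h3 := mul_nonneg hl0.le h1
      simp only [hPdef]
      linarith
    have hP1 : ∑ u, P u = 1 := by
      simp only [hPdef]
      rw [Finset.sum_add_distrib, ← Finset.mul_sum, hPs1, ← Finset.mul_sum,
        Finset.sum_ite_eq' Finset.univ x0 (fun _ => (1:ℝ))]
      simp
    have hQ : ∀ y, ∑ x', P x' * W x' y = Q y := by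
      intro y
      have he : ∀ u, P u * W u y
          = (1 - l) * (Pstar u * W u y) + l * (if u = x0 then W u y else 0) := by
        intro u
        by_cases hu : u = x0 <;> simp only [hPdef, hu, if_true, if_false, ite_true, ite_false] <;> ring
      rw [Finset.sum_congr rfl fun u _ => he u, Finset.sum_add_distrib,
        ← Finset.mul_sum, ← Finset.mul_sum, ← hPY y,
        Finset.sum_ite_eq' Finset.univ x0 (fun u => W u y)]
      simp [hQdef]
    have hQpos : ∀ y, 0 < PY y → 0 < Q y := by
      intro y hy
      have := mul_nonneg hl0.le (hW0 x0 y)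
      have := mul_pos h1l hy
      simp only [hQdef]; linarith
    have hQzero : ∀ y, PY y = 0 → Q y = 0 := by
      intro y hy
      simp only [hQdef, hy, hzero y hy]; ring
    have hQsum : ∑ y, Q y = 1 := by
      simp only [hQdef]
      rw [Finset.sum_add_distrib, ← Finset.mul_sum, hPYsum, ← Finset.mul_sum, hW1]
      ring
    -- decomposition of I P
    have hIP : I P = (1 - l) * (∑ u, ∑ y, Pstar u * W u y * Real.log (W u y / Q y))
        + l * (∑ y, W x0 y * Real.log (W x0 y / Q y)) := by
      rw [hI P]
      simp_rw [hQ]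
      have expand : ∀ u y, P u * W u y * Real.log (W u y / Q y)
          = (1 - l) * (Pstar u * W u y * Real.log (W u y / Q y))
            + l * (if u = x0 then W u y * Real.log (W u y / Q y) else 0) := by
        intro u y
        by_cases hu : u = x0 <;>
          simp only [hPdef, hu, if_true, if_false, ite_true, ite_false] <;> ring
      calc ∑ u, ∑ y, P u * W u y * Real.log (W u y / Q y)
          = ∑ u, ∑ y, ((1 - l) * (Pstar u * W u y * Real.log (W u y / Q y))
            + l * (if u = x0 then W u y * Real.log (W u y / Q y) else 0)) :=
            Finset.sum_congr rfl fun u _ => Finset.sum_congr rfl fun y _ => expand u y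
        _ = (1 - l) * (∑ u, ∑ y, Pstar u * W u y * Real.log (W u y / Q y))
            + l * (∑ u, ∑ y, if u = x0 then W u y * Real.log (W u y / Q y) else 0) := by
            simp_rw [Finset.sum_add_distrib, ← Finset.mul_sum]
        _ = _ := by
            congr 1
            rw [Finset.sum_comm]
            simp only [Finset.sum_ite_eq', Finset.mem_univ, if_true, ← Finset.mul_sum]
    -- A ≥ I Pstar
    have hA : I Pstar ≤ ∑ u, ∑ y, Pstar u * W u y * Real.log (W u y / Q y) := by
      have hsplit : ∀ u y,
          Pstar u * W u y * Real.log (W u y / Q y)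
          = Pstar u * W u y * Real.log (W u y / PY y)
            + Pstar u * W u y * Real.log (PY y / Q y) := by
        intro u y
        rcases eq_or_lt_of_le (mul_nonneg (hPs0 u) (hW0 u y)) with h | h
        · rw [← h]; ring
        · have hWpos : 0 < W u y := by
            rcases (mul_pos_iff.mp h) with ⟨_, h2⟩ | ⟨h1, _⟩
            · exact h2
            · exact absurd h1 (not_lt.mpr (hPs0 u))
          have hPYpos := hsupp u y hWpos
          have hQp := hQpos y hPYpos
          rw [← mul_add, ← Real.log_mul (by positivity) (by positivity),
            div_mul_div_comm, mul_comm (W u y) (PY y), mul_div_mul_left _ _ (ne_of_gt hPYpos)]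
      have e1 : ∑ u, ∑ y, Pstar u * W u y * Real.log (W u y / Q y)
          = I Pstar + ∑ y, PY y * Real.log (PY y / Q y) := by
        calc ∑ u, ∑ y, Pstar u * W u y * Real.log (W u y / Q y)
            = ∑ u, ∑ y, (Pstar u * W u y * Real.log (W u y / PY y)
              + Pstar u * W u y * Real.log (PY y / Q y)) :=
              Finset.sum_congr rfl fun u _ => Finset.sum_congr rfl fun y _ => hsplit u y
          _ = (∑ u, ∑ y, Pstar u * W u y * Real.log (W u y / PY y))
              + ∑ u, ∑ y, Pstar u * W u y * Real.log (PY y / Q y) := by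
              rw [← Finset.sum_add_distrib]
              exact Finset.sum_congr rfl fun u _ => Finset.sum_add_distrib
          _ = I Pstar + ∑ y, PY y * Real.log (PY y / Q y) := by
              congr 1
              · rw [hI Pstar]
                exact Finset.sum_congr rfl fun u _ => Finset.sum_congr rfl fun y _ => by
                  rw [hPY y]
              · rw [Finset.sum_comm]
                refine Finset.sum_congr rfl fun y _ => ?_
                rw [← Finset.sum_mul, ← hPY]
      rw [e1]
      have h2 : ∀ y ∈ Finset.univ, PY y - Q y ≤ PY y * Real.log (PY y / Q y) := by
        intro y _
        rcases eq_or_lt_of_le (hPY0 y) with h | hPYpos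
        · rw [← h, hQzero y h.symm]; simp
        · have hQp := hQpos y hPYpos
          have hlog := Real.log_le_sub_one_of_pos (div_pos hQp hPYpos)
          rw [Real.log_div (ne_of_gt hQp) (ne_of_gt hPYpos)] at hlog
          rw [Real.log_div (ne_of_gt hPYpos) (ne_of_gt hQp)]
          have key := mul_le_mul_of_nonneg_left hlog hPYpos.le
          have key2 : PY y * (Q y / PY y - 1) = Q y - PY y := by
            field_simp
          linarith [key, key2]
      have h3 : (0:ℝ) ≤ ∑ y, PY y * Real.log (PY y / Q y) := by
        calc (0:ℝ) = ∑ y, (PY y - Q y) := by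
              rw [Finset.sum_sub_distrib, hPYsum, hQsum]; ring
          _ ≤ _ := Finset.sum_le_sum h2
      linarith
    -- B ≥ D + l * (1 - K)
    have hB : D + l * (1 - K) ≤ ∑ y, W x0 y * Real.log (W x0 y / Q y) := by
      have h2 : ∀ y ∈ Finset.univ,
          W x0 y * Real.log (W x0 y / PY y)
            + (W x0 y - ((1 - l) * W x0 y + l * (W x0 y * (W x0 y / PY y))))
          ≤ W x0 y * Real.log (W x0 y / Q y) := by
        intro y _
        rcases eq_or_lt_of_le (hW0 x0 y) with h | hWpos
        · rw [← h]; simp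
        · have hPYpos := hsupp x0 y hWpos
          have hQp := hQpos y hPYpos
          have hsplit : Real.log (W x0 y / Q y)
              = Real.log (W x0 y / PY y) + Real.log (PY y / Q y) := by
            rw [← Real.log_mul (by positivity) (by positivity), div_mul_div_comm,
              mul_comm (W x0 y) (PY y), mul_div_mul_left _ _ (ne_of_gt hPYpos)]
          rw [hsplit, mul_add]
          have hlog := Real.log_le_sub_one_of_pos (div_pos hQp hPYpos)
          rw [Real.log_div (ne_of_gt hQp) (ne_of_gt hPYpos)] at hlog
          rw [Real.log_div (ne_of_gt hPYpos) (ne_of_gt hQp)]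
          have hQe : Q y = (1 - l) * PY y + l * W x0 y := by rw [hQdef]
          have hexp : W x0 y * (Q y / PY y)
              = (1 - l) * W x0 y + l * (W x0 y * (W x0 y / PY y)) := by
            rw [hQe]; field_simp
          have key := mul_le_mul_of_nonneg_left hlog hWpos.le
          have key2 : W x0 y * (Q y / PY y - 1)
              = (1 - l) * W x0 y + l * (W x0 y * (W x0 y / PY y)) - W x0 y := by
            rw [mul_sub, hexp]; ring
          linarith [key, key2]
      calc D + l * (1 - K)
          = ∑ y, (W x0 y * Real.log (W x0 y / PY y)
            + (W x0 y - ((1 - l) * W x0 y + l * (W x0 y * (W x0 y / PY y))))) := by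
            rw [Finset.sum_add_distrib, Finset.sum_sub_distrib, Finset.sum_add_distrib,
              ← Finset.mul_sum, ← Finset.mul_sum, hW1, ← hK, ← hD]
            ring
        _ ≤ _ := Finset.sum_le_sum h2
    have hle := hmax P hP0 hP1
    rw [hIP] at hle
    nlinarith [hle, hA, hB, hl0, h1l]
  -- conclude by letting l → 0
  by_contra hcon
  push_neg at hcon
  have hεpos : 0 < D - I Pstar := by linarith
  set c := K - 1 with hc
  set l := min (1/2 : ℝ) ((D - I Pstar) / (2 * (|c| + 1))) with hl
  have hl0 : 0 < l := lt_min (by norm_num) (div_pos hεpos (by positivity))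
  have hl1 : l < 1 := lt_of_le_of_lt (min_le_left _ _) (by norm_num)
  have hmain := main l hl0 hl1
  have hlc : l * c < D - I Pstar := by
    calc l * c ≤ l * |c| := mul_le_mul_of_nonneg_left (le_abs_self c) hl0.le
    _ ≤ ((D - I Pstar) / (2 * (|c| + 1))) * |c| :=
        mul_le_mul_of_nonneg_right (min_le_right _ _) (abs_nonneg c)
    _ < D - I Pstar := by
        rw [div_mul_eq_mul_div, div_lt_iff₀ (by positivity)]
        nlinarith [abs_nonneg c]
  linarith
end
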